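/- Fix g, h₁, h₂, q and P_n(h₂,g), P_d(h₂,g) with P_d(h₂,g) ≠ 0, and let f, f̄ satisfy V(f̄, f) = 0 with V as in the paper. Define φ = (f-g)(f/h₁-g/h₂) - (h₁-h₂)(1/h₁-1/h₂) and φ_u = (f̄-g)(f̄q/h₁-g/h₂) - (h₁/q-h₂)(q/h₁-1/h₂). Then the rational function R(x₁,x₂) = (f-x₁)V(x₂,f) / ((f̄-x₂)V(f̄,x₁)) is independent of x₁ and x₂, and equals (h₁-h₂q)φ / ((h₁-h₂)φ_u), assuming all denominators are nonzero. -/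

import Mathlib

/-!
`Vpol` is affine in each of its last two arguments, so once `V(f̄, f) = 0` we have
`V(x₂, f) = (x₂ - f̄) ∂₁V(f)` and `V(f̄, x₁) = (x₁ - f) ∂₂V(f̄)`; the factors in `x₁, x₂` cancel and
the ratio is `∂₁V(f) / ∂₂V(f̄)`. That this equals `(h₁ - h₂ q) φ / ((h₁ - h₂) φ_u)` follows because
`(h₁ - h₂) ∂₁V(f) φ_u - (h₁ - h₂ q) ∂₂V(f̄) φ` is an explicit multiple of `V(f̄, f)`.
-/

noncomputable def Pn (m : ℕ → ℂ) (h x : ℂ) : ℂ :=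
  m 0 * x ^ 4 - m 1 * x ^ 3 + (m 2 - 3 * h * m 0 - h⁻¹ ^ 3 * m 8) * x ^ 2
    + (2 * h * m 1 - m 3 + h⁻¹ ^ 2 * m 7) * x
    + (h ^ 2 * m 0 - h * m 2 + m 4 - h⁻¹ * m 6 + h⁻¹ ^ 2 * m 8)

noncomputable def Pd (m : ℕ → ℂ) (h x : ℂ) : ℂ :=
  m 8 * x ^ 4 - h * m 7 * x ^ 3 + (h ^ 2 * m 6 - 3 * h * m 8 - h ^ 5 * m 0) * x ^ 2
    + (2 * h ^ 2 * m 7 - h ^ 3 * m 5 + h ^ 5 * m 1) * x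
    + (h ^ 6 * m 0 - h ^ 5 * m 2 + h ^ 4 * m 4 - h ^ 3 * m 6 + h ^ 2 * m 8)

noncomputable def Vpol (m : ℕ → ℂ) (h₁ h₂ q g f₀ f : ℂ) : ℂ :=
  q * ((f₀ - g) * (f - g) - (h₁ / q - h₂) * (h₁ - h₂) / h₂) * Pd m h₂ g
    - h₁ ^ 2 * h₂ ^ 4 *
      ((f₀ * q / h₁ - g / h₂) * (f / h₁ - g / h₂)
        - (q / h₁ - 1 / h₂) * (1 / h₁ - 1 / h₂) * h₂) * Pn m h₂ g

theorem div_eq_div_of_biaffine {K : Type*} [Field K] {V : K → K → K} {L M : K → K}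
    (hL : ∀ x y b, V x b - V y b = (x - y) * L b) (hM : ∀ a x y, V a x - V a y = (x - y) * M a)
    {a b : K} (hV : V a b = 0) {x₁ x₂ : K} (hne : (a - x₂) * V a x₁ ≠ 0) :
    (b - x₁) * V x₂ b / ((a - x₂) * V a x₁) = L b / M a := by
  have hVx₂ : V x₂ b = (x₂ - a) * L b := by simpa [hV] using hL x₂ a b
  have hVx₁ : V a x₁ = (x₁ - b) * M a := by simpa [hV] using hM a x₁ b
  rw [hVx₁] at hne ⊢
  rw [hVx₂]
  have hx₁ : x₁ - b ≠ 0 := right_ne_zero_of_mul hne |> left_ne_zero_of_mul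
  have hx₂ : a - x₂ ≠ 0 := left_ne_zero_of_mul hne
  have hMa : M a ≠ 0 := right_ne_zero_of_mul hne |> right_ne_zero_of_mul
  field_simp
  ring

section VpolSlope

variable (m : ℕ → ℂ) (h₁ h₂ q g : ℂ)

noncomputable def VpolSlopeFst (f : ℂ) : ℂ :=
  q * (f - g) * Pd m h₂ g - h₁ ^ 2 * h₂ ^ 4 * (q / h₁ * (f / h₁ - g / h₂)) * Pn m h₂ g

noncomputable def VpolSlopeSnd (f₀ : ℂ) : ℂ :=
  q * (f₀ - g) * Pd m h₂ g - h₁ ^ 2 * h₂ ^ 4 * ((f₀ * q / h₁ - g / h₂) / h₁) * Pn m h₂ g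

theorem Vpol_sub_Vpol_fst (x y f : ℂ) :
    Vpol m h₁ h₂ q g x f - Vpol m h₁ h₂ q g y f = (x - y) * VpolSlopeFst m h₁ h₂ q g f := by
  simp only [Vpol, VpolSlopeFst]
  ring

theorem Vpol_sub_Vpol_snd (f₀ x y : ℂ) :
    Vpol m h₁ h₂ q g f₀ x - Vpol m h₁ h₂ q g f₀ y = (x - y) * VpolSlopeSnd m h₁ h₂ q g f₀ := by
  simp only [Vpol, VpolSlopeSnd]
  ring

theorem VpolSlope_cross_sub_eq_mul_Vpol (hh₁ : h₁ ≠ 0) (hh₂ : h₂ ≠ 0) (hq : q ≠ 0) (f fb : ℂ) :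
    (h₁ - h₂) * VpolSlopeFst m h₁ h₂ q g f
        * ((fb - g) * (fb * q / h₁ - g / h₂) - (h₁ / q - h₂) * (q / h₁ - 1 / h₂))
      - (h₁ - h₂ * q) * VpolSlopeSnd m h₁ h₂ q g fb
        * ((f - g) * (f / h₁ - g / h₂) - (h₁ - h₂) * (1 / h₁ - 1 / h₂))
      = (q * (h₁ - h₂) * (fb - g) - (h₁ - h₂ * q) * (f - g)) / h₁
        * Vpol m h₁ h₂ q g fb f := by
  simp only [Vpol, VpolSlopeFst, VpolSlopeSnd]
  field_simp
  ring

end VpolSlope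

theorem stmt9_general (m : ℕ → ℂ) (h₁ h₂ q : ℂ) (hh₁ : h₁ ≠ 0) (hh₂ : h₂ ≠ 0) (hq : q ≠ 0)
    (h12 : h₁ ≠ h₂)
    (g f fb : ℂ)
    (hV : Vpol m h₁ h₂ q g fb f = 0)
    (φ φu : ℂ)
    (hφ : φ = (f - g) * (f / h₁ - g / h₂) - (h₁ - h₂) * (1 / h₁ - 1 / h₂))
    (hφu : φu = (fb - g) * (fb * q / h₁ - g / h₂) - (h₁ / q - h₂) * (q / h₁ - 1 / h₂))
    (hφu0 : φu ≠ 0) :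
    ∀ x₁ x₂ : ℂ, (fb - x₂) * Vpol m h₁ h₂ q g fb x₁ ≠ 0 →
      (f - x₁) * Vpol m h₁ h₂ q g x₂ f / ((fb - x₂) * Vpol m h₁ h₂ q g fb x₁)
        = (h₁ - h₂ * q) * φ / ((h₁ - h₂) * φu) := by
  intro x₁ x₂ hne
  rw [div_eq_div_of_biaffine (Vpol_sub_Vpol_fst m h₁ h₂ q g) (Vpol_sub_Vpol_snd m h₁ h₂ q g) hV hne]
  have hslope : VpolSlopeSnd m h₁ h₂ q g fb ≠ 0 := by
    have hVx₁ := Vpol_sub_Vpol_snd m h₁ h₂ q g fb x₁ f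
    rw [hV, sub_zero] at hVx₁
    exact right_ne_zero_of_mul (hVx₁ ▸ right_ne_zero_of_mul hne)
  rw [div_eq_div_iff hslope (mul_ne_zero (sub_ne_zero.mpr h12) hφu0), hφ, hφu]
  linear_combination VpolSlope_cross_sub_eq_mul_Vpol m h₁ h₂ q g hh₁ hh₂ hq f fb
    + (q * (h₁ - h₂) * (fb - g) - (h₁ - h₂ * q) * (f - g)) / h₁ * hV

theorem stmt9 (m : ℕ → ℂ) (h₁ h₂ q : ℂ) (hh₁ : h₁ ≠ 0) (hh₂ : h₂ ≠ 0) (hq : q ≠ 0)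
    (h12 : h₁ ≠ h₂) (h12q : h₁ ≠ h₂ * q)
    (g f fb : ℂ)
    (hPd : Pd m h₂ g ≠ 0)
    (hV : Vpol m h₁ h₂ q g fb f = 0)
    (φ φu : ℂ)
    (hφ : φ = (f - g) * (f / h₁ - g / h₂) - (h₁ - h₂) * (1 / h₁ - 1 / h₂))
    (hφu : φu = (fb - g) * (fb * q / h₁ - g / h₂) - (h₁ / q - h₂) * (q / h₁ - 1 / h₂))
    (hφu0 : φu ≠ 0) :
    ∀ x₁ x₂ : ℂ, (fb - x₂) * Vpol m h₁ h₂ q g fb x₁ ≠ 0 →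
      (f - x₁) * Vpol m h₁ h₂ q g x₂ f / ((fb - x₂) * Vpol m h₁ h₂ q g fb x₁)
        = (h₁ - h₂ * q) * φ / ((h₁ - h₂) * φu) :=
  stmt9_general m h₁ h₂ q hh₁ hh₂ hq h12 g f fb hV φ φu hφ hφu hφu0
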